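/- Let n ≥ 1, let a₁, …, aₙ ≥ 0 be real numbers, and let x ≥ 0 satisfy aᵢ + x > 0 for every i. Then √((1/n) Σᵢ aᵢ/(aᵢ + x)²) · √((1/n) Σᵢ aᵢ) + √((1/n) Σᵢ (x/(aᵢ + x))²) ≥ 1. -/

import Mathlib

/-!
Write `1 = a/(a+x) + x/(a+x)` termwise and average over `i`. Cauchy–Schwarz bounds the mean of
`a/(a+x) = (√a/(a+x)) · √a` by the product of the first two square roots, and the mean of
`x/(a+x) = 1 · x/(a+x)` by the root mean square of `x/(a+x)`.
-/

open Finset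

namespace Real

variable {ι : Type*} (s : Finset ι) {c : ℝ}

lemma mul_sum_mul_le_sqrt_mul_sqrt (f g : ι → ℝ) (hc : 0 ≤ c) :
    c * ∑ i ∈ s, f i * g i ≤ √(c * ∑ i ∈ s, f i ^ 2) * √(c * ∑ i ∈ s, g i ^ 2) := by
  rw [sqrt_mul hc, sqrt_mul hc, mul_mul_mul_comm, mul_self_sqrt hc]
  gcongr
  exact sum_mul_le_sqrt_mul_sqrt s f g

lemma mul_sum_div_le_sqrt_mul_sqrt {a : ι → ℝ} (b : ι → ℝ) (ha : ∀ i ∈ s, 0 ≤ a i)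
    (hc : 0 ≤ c) :
    c * ∑ i ∈ s, a i / b i ≤ √(c * ∑ i ∈ s, a i / b i ^ 2) * √(c * ∑ i ∈ s, a i) := by
  have hprod : ∑ i ∈ s, √(a i) / b i * √(a i) = ∑ i ∈ s, a i / b i :=
    sum_congr rfl fun i hi ↦ by rw [div_mul_eq_mul_div, mul_self_sqrt (ha i hi)]
  have hleft : ∑ i ∈ s, (√(a i) / b i) ^ 2 = ∑ i ∈ s, a i / b i ^ 2 :=
    sum_congr rfl fun i hi ↦ by rw [div_pow, sq_sqrt (ha i hi)]
  have hright : ∑ i ∈ s, √(a i) ^ 2 = ∑ i ∈ s, a i :=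
    sum_congr rfl fun i hi ↦ sq_sqrt (ha i hi)
  rw [← hprod, ← hleft, ← hright]
  exact mul_sum_mul_le_sqrt_mul_sqrt s _ _ hc

lemma mul_sum_le_sqrt_mul_sum_sq (f : ι → ℝ) (hcs : c * #s = 1) :
    c * ∑ i ∈ s, f i ≤ √(c * ∑ i ∈ s, f i ^ 2) := by
  have hc : 0 ≤ c := (pos_of_mul_pos_left (hcs ▸ one_pos) (Nat.cast_nonneg _)).le
  simpa [hcs] using mul_sum_mul_le_sqrt_mul_sqrt s (fun _ ↦ 1) f hc

end Real

theorem stmt2 (n : ℕ) (hn : 1 ≤ n) (a : Fin n → ℝ) (ha : ∀ i, 0 ≤ a i)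
    (x : ℝ) (hax : ∀ i, 0 < a i + x) :
    1 ≤ Real.sqrt ((1 / n : ℝ) * ∑ i, a i / (a i + x) ^ 2) *
          Real.sqrt ((1 / n : ℝ) * ∑ i, a i)
        + Real.sqrt ((1 / n : ℝ) * ∑ i, (x / (a i + x)) ^ 2) := by
  have hn' : (0 : ℝ) < n := by exact_mod_cast hn
  have hsplit : (1 / n : ℝ) * ∑ i, a i / (a i + x) + (1 / n : ℝ) * ∑ i, x / (a i + x) = 1 := by
    rw [← mul_add, ← sum_add_distrib]
    simp [← add_div, div_self (hax _).ne', hn'.ne']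
  have hfirst := Real.mul_sum_div_le_sqrt_mul_sqrt univ (fun i ↦ a i + x) (fun i _ ↦ ha i)
    (c := 1 / n) (by positivity)
  have hsecond := Real.mul_sum_le_sqrt_mul_sum_sq univ (fun i ↦ x / (a i + x))
    (c := 1 / n) (by simp [hn'.ne'])
  linarith
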